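/- arXiv:2601.10370 — 3 statements merged into one kernel-verified Lean document; each statement's English description precedes it below -/
import Mathlib

section
/- Let H be a real Hilbert space, C ⊆ H nonempty closed convex, A : H → H, and λ > 0, μ ∈ (0,1). Suppose w ∈ H, y = P_C(w - λAw), q ∈ C satisfies ⟨Az, z - q⟩ ≥ 0 for all z ∈ C, and x⁺ = y - λ(Ay - Aw). If λ‖Aw - Ay‖ ≤ μ‖w - y‖, then ‖x⁺ - q‖² ≤ ‖w - q‖² - (1 - μ²)‖w - y‖². -/
open scoped RealInnerProductSpace

theorem tseng_step_contraction
    {H : Type*} [NormedAddCommGroup H] [InnerProductSpace ℝ H] [CompleteSpace H]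
    (C : Set H) (hC : C.Nonempty) (hCclosed : IsClosed C) (hCconv : Convex ℝ C)
    (A : H → H) (lam μ : ℝ) (hlam : 0 < lam) (hμ : μ ∈ Set.Ioo (0 : ℝ) 1)
    (w y q xplus : H)
    (hyC : y ∈ C)
    (hproj : ∀ z ∈ C, ⟪(w - lam • A w) - y, z - y⟫ ≤ 0)
    (hqC : q ∈ C)
    (hq : ∀ z ∈ C, 0 ≤ ⟪A z, z - q⟫)
    (hx : xplus = y - lam • (A y - A w))
    (hstep : lam * ‖A w - A y‖ ≤ μ * ‖w - y‖) :
    ‖xplus - q‖ ^ 2 ≤ ‖w - q‖ ^ 2 - (1 - μ ^ 2) * ‖w - y‖ ^ 2 := by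
  have key : ‖xplus - q‖ ^ 2 = ‖w - q‖ ^ 2 - ‖w - y‖ ^ 2
      + 2 * ⟪(w - lam • A w) - y, q - y⟫ + 2 * lam * ⟪A y, y - q⟫ * (-1)
      + lam ^ 2 * ‖A w - A y‖ ^ 2 := by
    subst hx
    simp only [← real_inner_self_eq_norm_sq]
    simp only [inner_sub_left, inner_sub_right, inner_smul_left, inner_smul_right,
      RCLike.conj_to_real]
    ring_nf
    rw [real_inner_comm q y, real_inner_comm y (A y), real_inner_comm q (A y),
      real_inner_comm y (A w), real_inner_comm q (A w),
      real_inner_comm q w, real_inner_comm y w]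
    ring
  have h1 : ⟪(w - lam • A w) - y, q - y⟫ ≤ 0 := hproj q hqC
  have h2 : 0 ≤ ⟪A y, y - q⟫ := hq y hyC
  have h3 : lam ^ 2 * ‖A w - A y‖ ^ 2 ≤ μ ^ 2 * ‖w - y‖ ^ 2 := by
    have := mul_self_le_mul_self (by positivity) hstep
    nlinarith
  nlinarith [h1, h2, h3, key, hlam]
end

section
/- Let H be a real Hilbert space, C ⊆ H nonempty closed convex, A : H → H quasimonotone and L-Lipschitz. Let (y_k) ⊆ C with y_k ⇀ v* ∈ C and suppose there is M₁ > 0 with ‖Ay_k‖ ≥ M₁/2 for all large k, liminf_{k→∞} ⟨Ay_k, x - y_k⟩ ≥ 0 for all x ∈ C, and (y_k) bounded. Then ⟨Ax, x - v*⟩ ≥ 0 for all x ∈ C, i.e., v* ∈ S_D. -/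
open scoped RealInnerProductSpace
open Filter

theorem quasimonotone_weak_cluster_minty
    {H : Type*} [NormedAddCommGroup H] [InnerProductSpace ℝ H] [CompleteSpace H]
    (C : Set H) (hC : C.Nonempty) (hCclosed : IsClosed C) (hCconv : Convex ℝ C)
    (A : H → H)
    (hquasi : ∀ x y : H, 0 < ⟪A x, y - x⟫ → 0 ≤ ⟪A y, y - x⟫)
    (L : ℝ) (hL : 0 < L)
    (hLip : ∀ x y : H, ‖A x - A y‖ ≤ L * ‖x - y‖)
    (y : ℕ → H) (hyC : ∀ k, y k ∈ C)
    (vstar : H) (hvC : vstar ∈ C)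
    (hweak : ∀ f : H, Tendsto (fun k => ⟪y k, f⟫) atTop (nhds ⟪vstar, f⟫))
    (M₁ : ℝ) (hM₁ : 0 < M₁)
    (hbig : ∀ᶠ k in atTop, M₁ / 2 ≤ ‖A (y k)‖)
    (hliminf : ∀ x ∈ C, 0 ≤ liminf (fun k => ⟪A (y k), x - y k⟫) atTop)
    (hbdd : ∃ M : ℝ, ∀ k, ‖y k‖ ≤ M) :
    ∀ x ∈ C, 0 ≤ ⟪A x, x - vstar⟫ := by
  obtain ⟨M, hM⟩ := hbdd
  have hM0 : 0 ≤ M := (norm_nonneg _).trans (hM 0)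
  intro x hx
  -- abbreviations for the two error terms
  obtain ⟨B1, hB1⟩ : ∃ c : ℝ, c = L * (2 / M₁) * (‖x‖ + M) := ⟨_, rfl⟩
  obtain ⟨B2, hB2⟩ : ∃ c : ℝ, c = (‖x‖ + 2 / M₁ + M) * L * (2 / M₁) := ⟨_, rfl⟩
  have hB1nn : 0 ≤ B1 := by rw [hB1]; positivity
  have hB2nn : 0 ≤ B2 := by rw [hB2]; positivity
  obtain ⟨Cst, hCst⟩ : ∃ c : ℝ, c = B1 + 1 + B2 + 1 := ⟨_, rfl⟩
  have hCst1 : 1 ≤ Cst := by rw [hCst]; linarith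
  have hCst0 : 0 < Cst := lt_of_lt_of_le one_pos hCst1
  -- key estimate: for every ε ∈ (0,1], ⟪A x, x - vstar⟫ ≥ -(ε * Cst)
  have key : ∀ ε : ℝ, 0 < ε → ε ≤ 1 → -(ε * Cst) ≤ ⟪A x, x - vstar⟫ := by
    intro ε hε hε1
    -- the sequence ⟪A y_k, x - y_k⟫ is bounded below
    have hAy : ∀ k, ‖A (y k)‖ ≤ ‖A 0‖ + L * M := by
      intro k
      calc ‖A (y k)‖ ≤ ‖A (y k) - A 0‖ + ‖A 0‖ := by
            simpa using norm_add_le (A (y k) - A 0) (A 0)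
        _ ≤ L * ‖y k - 0‖ + ‖A 0‖ := by linarith [hLip (y k) 0]
        _ ≤ ‖A 0‖ + L * M := by
            have h1 := hM k
            have h2 : ‖y k - 0‖ = ‖y k‖ := by simp
            rw [h2]; nlinarith
    have hxyk : ∀ k, ‖x - y k‖ ≤ ‖x‖ + M := by
      intro k
      calc ‖x - y k‖ ≤ ‖x‖ + ‖y k‖ := norm_sub_le _ _
        _ ≤ ‖x‖ + M := by linarith [hM k]
    have hbelow : IsBoundedUnder (· ≥ ·) atTop (fun k => ⟪A (y k), x - y k⟫) := by
      refine isBoundedUnder_of ⟨-((‖A 0‖ + L * M) * (‖x‖ + M)), fun k => ?_⟩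
      have h1 : |⟪A (y k), x - y k⟫| ≤ ‖A (y k)‖ * ‖x - y k‖ := abs_real_inner_le_norm _ _
      have h3 : ‖A (y k)‖ * ‖x - y k‖ ≤ (‖A 0‖ + L * M) * (‖x‖ + M) :=
        mul_le_mul (hAy k) (hxyk k) (norm_nonneg _) (by positivity)
      have := neg_abs_le ⟪A (y k), x - y k⟫
      simp only [ge_iff_le]
      linarith
    have hev : ∀ᶠ k in atTop, -(ε / 2) < ⟪A (y k), x - y k⟫ :=
      eventually_lt_of_lt_liminf (lt_of_lt_of_le (by linarith) (hliminf x hx)) hbelow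
    -- the per-k estimate
    have hkey : ∀ᶠ k in atTop, -(ε * Cst) ≤ ⟪A x, x - y k⟫ := by
      filter_upwards [hbig, hev] with k hk1 hk2
      have hAk0 : 0 < ‖A (y k)‖ := lt_of_lt_of_le (by linarith) hk1
      have hrn : ‖A (y k)‖⁻¹ ≤ 2 / M₁ := by
        rw [inv_le_comm₀ hAk0 (by positivity), inv_div]
        exact hk1
      set r : H := ‖A (y k)‖⁻¹ ^ 2 • A (y k) with hr
      have hrnorm : ‖r‖ = ‖A (y k)‖⁻¹ := by
        rw [hr, norm_smul, norm_pow, norm_inv, norm_norm]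
        field_simp
      have hrle : ‖r‖ ≤ 2 / M₁ := by rw [hrnorm]; exact hrn
      set z : H := x + ε • r with hz
      have hinner_r : ⟪A (y k), r⟫ = 1 := by
        rw [hr, real_inner_smul_right, real_inner_self_eq_norm_sq]
        field_simp
      have hzyk : z - y k = (x - y k) + ε • r := by rw [hz]; abel
      have hpos : 0 < ⟪A (y k), z - y k⟫ := by
        rw [hzyk, inner_add_right, real_inner_smul_right, hinner_r]
        linarith
      have hq := hquasi (y k) z hpos
      -- estimates
      have hεr : ‖ε • r‖ ≤ ε * (2 / M₁) := by
        rw [norm_smul, Real.norm_eq_abs, abs_of_pos hε]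
        exact mul_le_mul_of_nonneg_left hrle hε.le
      have hzx : ‖z - x‖ ≤ ε * (2 / M₁) := by
        have h1 : z - x = ε • r := by rw [hz]; abel
        rw [h1]; exact hεr
      have hAzx : ‖A z - A x‖ ≤ L * (ε * (2 / M₁)) := by
        calc ‖A z - A x‖ ≤ L * ‖z - x‖ := hLip z x
          _ ≤ L * (ε * (2 / M₁)) := mul_le_mul_of_nonneg_left hzx hL.le
      have hzy : ‖z - y k‖ ≤ ‖x‖ + 2 / M₁ + M := by
        calc ‖z - y k‖ = ‖(x - y k) + ε • r‖ := by rw [hzyk]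
          _ ≤ ‖x - y k‖ + ‖ε • r‖ := norm_add_le _ _
          _ ≤ (‖x‖ + M) + ε * (2 / M₁) := add_le_add (hxyk k) hεr
          _ ≤ ‖x‖ + 2 / M₁ + M := by
              have h1 : ε * (2 / M₁) ≤ 1 * (2 / M₁) :=
                mul_le_mul_of_nonneg_right hε1 (by positivity)
              linarith
      -- decompose
      have hdec : ⟪A x, x - y k⟫ =
          ⟪A z, z - y k⟫ - ⟪A z - A x, x - y k⟫ - ε * ⟪A z, r⟫ := by
        rw [hzyk, inner_add_right, inner_sub_left, real_inner_smul_right]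
        ring
      rw [hdec]
      have e1 : ⟪A z - A x, x - y k⟫ ≤ ε * B1 := by
        have h1 := real_inner_le_norm (A z - A x) (x - y k)
        have h2 : ‖A z - A x‖ * ‖x - y k‖ ≤ (L * (ε * (2 / M₁))) * (‖x‖ + M) :=
          mul_le_mul hAzx (hxyk k) (norm_nonneg _) (by positivity)
        have h3 : (L * (ε * (2 / M₁))) * (‖x‖ + M) = ε * B1 := by rw [hB1]; ring
        linarith
      have e2 : ⟪A z, r⟫ ≤ 1 + B2 := by
        have h1 : ⟪A z, r⟫ = ⟪A (y k), r⟫ + ⟪A z - A (y k), r⟫ := by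
          rw [inner_sub_left]; ring
        have h2 := real_inner_le_norm (A z - A (y k)) r
        have h3 : ‖A z - A (y k)‖ ≤ L * (‖x‖ + 2 / M₁ + M) := by
          calc ‖A z - A (y k)‖ ≤ L * ‖z - y k‖ := hLip z (y k)
            _ ≤ L * (‖x‖ + 2 / M₁ + M) := mul_le_mul_of_nonneg_left hzy hL.le
        have h4 : ‖A z - A (y k)‖ * ‖r‖ ≤ (L * (‖x‖ + 2 / M₁ + M)) * (2 / M₁) :=
          mul_le_mul h3 hrle (norm_nonneg _) (by positivity)
        have h5 : (L * (‖x‖ + 2 / M₁ + M)) * (2 / M₁) = B2 := by rw [hB2]; ring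
        rw [h1, hinner_r]
        linarith
      have e2' : ε * ⟪A z, r⟫ ≤ ε * (1 + B2) := mul_le_mul_of_nonneg_left e2 hε.le
      have hfinal : ε * B1 + ε * (1 + B2) ≤ ε * Cst := by
        have h1 : ε * B1 + ε * (1 + B2) = ε * (B1 + 1 + B2) := by ring
        rw [h1, hCst]
        exact mul_le_mul_of_nonneg_left (by linarith) hε.le
      linarith
    -- take the limit
    have hten : Tendsto (fun k => ⟪A x, x - y k⟫) atTop (nhds ⟪A x, x - vstar⟫) := by
      have h1 : Tendsto (fun k => ⟪y k, A x⟫) atTop (nhds ⟪vstar, A x⟫) := hweak (A x)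
      have h2 : (fun k => ⟪A x, x - y k⟫) = fun k => ⟪A x, x⟫ - ⟪y k, A x⟫ := by
        funext k
        rw [inner_sub_right, real_inner_comm (y k) (A x)]
      have h3 : ⟪A x, x - vstar⟫ = ⟪A x, x⟫ - ⟪vstar, A x⟫ := by
        rw [inner_sub_right, real_inner_comm vstar (A x)]
      rw [h2, h3]
      exact tendsto_const_nhds.sub h1
    exact ge_of_tendsto hten hkey
  -- conclude
  by_contra hneg
  push_neg at hneg
  have ht : ⟪A x, x - vstar⟫ < 0 := hneg
  obtain ⟨ε, hεdef⟩ : ∃ e : ℝ, e = min (-⟪A x, x - vstar⟫ / (2 * Cst)) 1 := ⟨_, rfl⟩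
  have hε0 : 0 < ε := by rw [hεdef]; exact lt_min (div_pos (by linarith) (by positivity)) one_pos
  have hε1 : ε ≤ 1 := by rw [hεdef]; exact min_le_right _ _
  have h1 := key ε hε0 hε1
  have h2 : ε * Cst ≤ -⟪A x, x - vstar⟫ / 2 := by
    have h3 : ε ≤ -⟪A x, x - vstar⟫ / (2 * Cst) := by rw [hεdef]; exact min_le_left _ _
    calc ε * Cst ≤ (-⟪A x, x - vstar⟫ / (2 * Cst)) * Cst :=
          mul_le_mul_of_nonneg_right h3 hCst0.le
      _ = -⟪A x, x - vstar⟫ / 2 := by field_simp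
  linarith
end

section
/- Let μ ∈ (0,1) and α, β ∈ ℝ satisfy 0 ≤ α ≤ (1-μ)/(3+μ), β ≤ 0, and (1/2)[α(1+μ) - ((1-μ)(1-α)²)/(1+α)] < β. Then (1+α)(α-β) - ((1-μ)/(1+μ))(α² - 2α + βα + β + 1) < 0. -/
theorem one_add_mul_coefficient_k1_eq {K : Type*} [Field K] (μ α β : K)
    (hα : 1 + α ≠ 0) (hμ : 1 + μ ≠ 0) :
    (1 + μ) * ((1 + α) * (α - β) - ((1 - μ) / (1 + μ)) * (α ^ 2 - 2 * α + β * α + β + 1))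
      = (1 + α) * ((α * (1 + μ) - ((1 - μ) * (1 - α) ^ 2) / (1 + α)) - 2 * β) := by
  field_simp
  ring

theorem coefficient_k1_negative_general
    (μ α β : ℝ) (hμ : μ ∈ Set.Ioo (0 : ℝ) 1)
    (hα0 : 0 ≤ α)
    (hβ : (1 / 2) * (α * (1 + μ) - ((1 - μ) * (1 - α) ^ 2) / (1 + α)) < β) :
    (1 + α) * (α - β) - ((1 - μ) / (1 + μ)) * (α ^ 2 - 2 * α + β * α + β + 1) < 0 := by
  have hα : 0 < 1 + α := by linarith
  have hμ' : 0 < 1 + μ := by linarith [hμ.1]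
  have hgap : α * (1 + μ) - ((1 - μ) * (1 - α) ^ 2) / (1 + α) - 2 * β < 0 := by linarith
  refine neg_of_mul_neg_right ?_ hμ'.le
  rw [one_add_mul_coefficient_k1_eq μ α β hα.ne' hμ'.ne']
  exact mul_neg_of_pos_of_neg hα hgap

theorem coefficient_k1_negative
    (μ α β : ℝ) (hμ : μ ∈ Set.Ioo (0 : ℝ) 1)
    (hα0 : 0 ≤ α) (hα1 : α ≤ (1 - μ) / (3 + μ))
    (hβ0 : β ≤ 0)
    (hβ : (1 / 2) * (α * (1 + μ) - ((1 - μ) * (1 - α) ^ 2) / (1 + α)) < β) :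
    (1 + α) * (α - β) - ((1 - μ) / (1 + μ)) * (α ^ 2 - 2 * α + β * α + β + 1) < 0 :=
  coefficient_k1_negative_general μ α β hμ hα0 hβ
end
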